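/- arXiv:1909.02540 — 4 statements merged into one kernel-verified Lean document; each statement's English description precedes it below -/
import Mathlib

section
/- Let F be a nonempty set of density matrices on ℂ^d and F' a set of density matrices on ℂ^{d'}. Let E : M_d(ℂ) → M_{d'}(ℂ) be a positive trace-preserving linear map such that E(ω) ∈ F' for every ω ∈ F. Let ρ be a full-rank density matrix on ℂ^d, let ψ ∈ ℂ^{d'} be a unit vector, and let ε ≥ 0 satisfy ⟨ψ, E(ρ) ψ⟩ ≥ 1 − ε. Then ε ≥ λ_min(ρ)·(1 − f_ψ), where f_ψ := sup_{ω ∈ F'} ⟨ψ, ω ψ⟩. (Theorem 1, deterministic case: no free deterministic protocol can purify a full-rank state to a pure target with error below λ_min(ρ)(1 − f_ψ).) -/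
open scoped Matrix ComplexOrder

noncomputable section

/-- A density matrix: a positive semidefinite complex matrix with unit trace. -/
def IsDensity {n : Type*} [Fintype n] (A : Matrix n n ℂ) : Prop :=
  A.PosSemidef ∧ A.trace = 1

/-- The smallest eigenvalue of a Hermitian matrix (`0` by convention otherwise). -/
noncomputable def minEig {n : Type*} [Fintype n] [DecidableEq n] (A : Matrix n n ℂ) : ℝ :=
  letI := Classical.propDecidable A.IsHermitian
  if h : A.IsHermitian then ⨅ i, h.eigenvalues i else 0

/-- The overlap `⟨ψ, A ψ⟩` (as a real number). -/
noncomputable def overlap {n : Type*} [Fintype n] (A : Matrix n n ℂ) (ψ : n → ℂ) : ℝ :=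
  (dotProduct (star ψ) (A.mulVec ψ)).re

/-- `f_ψ = sup_{ω ∈ F} ⟨ψ, ω ψ⟩`, with the convention `sup ∅ = 0`. -/
noncomputable def maxOverlap {n : Type*} [Fintype n] (F : Set (Matrix n n ℂ)) (ψ : n → ℂ) : ℝ :=
  sSup ((fun ω => overlap ω ψ) '' F)

/-- A positive map: it sends positive semidefinite matrices to positive semidefinite matrices. -/
def PosMap {n m : Type*} [Fintype n] [Fintype m]
    (Φ : Matrix n n ℂ →ₗ[ℂ] Matrix m m ℂ) : Prop :=
  ∀ X, X.PosSemidef → (Φ X).PosSemidef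

/-- A trace-preserving map. -/
def TracePreserving {n m : Type*} [Fintype n] [Fintype m]
    (Φ : Matrix n n ℂ →ₗ[ℂ] Matrix m m ℂ) : Prop :=
  ∀ X, (Φ X).trace = X.trace

/-!
Write `λ = λ_min(ρ)`. For any state `ω` we have `λ • ω ≤ λ • 1 ≤ ρ` in the Loewner order, so
`ρ = λ • ω + σ` with `σ ≥ 0` of trace `1 - λ`. Choosing `ω ∈ F`, the overlap of `E ω ∈ F'` with `ψ`
is at most `f_ψ`, while `E σ` is positive of trace `1 - λ`, hence `E σ ≤ (1 - λ) • 1`. Thus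
`1 - ε ≤ ⟨ψ, E ρ ψ⟩ ≤ λ f_ψ + 1 - λ`.
-/

open scoped MatrixOrder

section
variable {n : Type*} [Fintype n]

lemma minEig_le_eigenvalues [DecidableEq n] {A : Matrix n n ℂ} (hA : A.IsHermitian) (i : n) :
    minEig A ≤ hA.eigenvalues i := by
  rw [minEig, dif_pos hA]
  exact ciInf_le (Set.finite_range _).bddBelow i

lemma minEig_nonneg [DecidableEq n] {A : Matrix n n ℂ} (hA : A.PosSemidef) : 0 ≤ minEig A := by
  rw [minEig, dif_pos hA.1]
  exact Real.iInf_nonneg hA.eigenvalues_nonneg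

lemma minEig_smul_one_le [DecidableEq n] {A : Matrix n n ℂ} (hA : A.IsHermitian) :
    minEig A • (1 : Matrix n n ℂ) ≤ A := by
  rw [← Algebra.algebraMap_eq_smul_one, algebraMap_le_iff_le_spectrum hA.isSelfAdjoint,
    hA.spectrum_real_eq_range_eigenvalues]
  rintro _ ⟨i, rfl⟩
  exact minEig_le_eigenvalues hA i

lemma Matrix.PosSemidef.le_trace_smul_one [DecidableEq n] {A : Matrix n n ℂ} (hA : A.PosSemidef) :
    A ≤ A.trace.re • (1 : Matrix n n ℂ) := by
  rw [← Algebra.algebraMap_eq_smul_one, le_algebraMap_iff_spectrum_le hA.1.isSelfAdjoint,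
    hA.1.spectrum_real_eq_range_eigenvalues, hA.1.trace_eq_sum_eigenvalues]
  rintro _ ⟨i, rfl⟩
  simpa using Finset.single_le_sum (fun j _ => hA.eigenvalues_nonneg j) (Finset.mem_univ i)

lemma overlap_add (A B : Matrix n n ℂ) (ψ : n → ℂ) :
    overlap (A + B) ψ = overlap A ψ + overlap B ψ := by
  simp [overlap, Matrix.add_mulVec, dotProduct_add]

lemma overlap_sub (A B : Matrix n n ℂ) (ψ : n → ℂ) :
    overlap (A - B) ψ = overlap A ψ - overlap B ψ := by
  simp [overlap, Matrix.sub_mulVec, dotProduct_sub]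

lemma overlap_smul (c : ℝ) (A : Matrix n n ℂ) (ψ : n → ℂ) :
    overlap (c • A) ψ = c * overlap A ψ := by
  simp [overlap, Matrix.smul_mulVec, dotProduct_smul]

lemma overlap_one [DecidableEq n] {ψ : n → ℂ} (hψ : star ψ ⬝ᵥ ψ = 1) :
    overlap (1 : Matrix n n ℂ) ψ = 1 := by
  simp [overlap, hψ]

lemma overlap_mono {A B : Matrix n n ℂ} (hAB : A ≤ B) (ψ : n → ℂ) :
    overlap A ψ ≤ overlap B ψ := by
  rw [← sub_nonneg, ← overlap_sub]
  exact Matrix.PosSemidef.re_dotProduct_nonneg hAB ψ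

lemma IsDensity.le_one [DecidableEq n] {ω : Matrix n n ℂ} (hω : IsDensity ω) : ω ≤ 1 := by
  simpa [hω.2] using hω.1.le_trace_smul_one

lemma IsDensity.overlap_le_one {ω : Matrix n n ℂ} (hω : IsDensity ω) {ψ : n → ℂ}
    (hψ : star ψ ⬝ᵥ ψ = 1) : overlap ω ψ ≤ 1 := by
  classical
  simpa [overlap_one hψ] using overlap_mono hω.le_one ψ

lemma overlap_le_maxOverlap {F : Set (Matrix n n ℂ)} (hF : ∀ ω ∈ F, IsDensity ω) {ψ : n → ℂ}
    (hψ : star ψ ⬝ᵥ ψ = 1) {ω : Matrix n n ℂ} (hω : ω ∈ F) : overlap ω ψ ≤ maxOverlap F ψ := by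
  refine le_csSup ⟨1, ?_⟩ ⟨ω, hω, rfl⟩
  rintro _ ⟨ω', hω', rfl⟩
  exact (hF ω' hω').overlap_le_one hψ

lemma minEig_smul_le [DecidableEq n] {ρ ω : Matrix n n ℂ} (hρ : ρ.PosSemidef)
    (hω : IsDensity ω) : minEig ρ • ω ≤ ρ :=
  calc minEig ρ • ω ≤ minEig ρ • (1 : Matrix n n ℂ) :=
        smul_le_smul_of_nonneg_left hω.le_one (minEig_nonneg hρ)
    _ ≤ ρ := minEig_smul_one_le hρ.1

end

section
variable {n m : Type*} [Fintype n] [Fintype m]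

lemma overlap_map_le_of_smul_le [DecidableEq m] {Φ : Matrix n n ℂ →ₗ[ℂ] Matrix m m ℂ}
    (hΦpos : PosMap Φ) (hΦtp : TracePreserving Φ) {ρ ω : Matrix n n ℂ}
    (hρ : ρ.trace = 1) (hω : ω.trace = 1)
    {c : ℝ} (hc : c • ω ≤ ρ) {ψ : m → ℂ} (hψ : star ψ ⬝ᵥ ψ = 1) :
    overlap (Φ ρ) ψ ≤ c * overlap (Φ ω) ψ + (1 - c) := by
  have hσ : (Φ (ρ - c • ω)).PosSemidef := hΦpos _ hc
  have htr : (Φ (ρ - c • ω)).trace.re = 1 - c := by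
    rw [hΦtp, Matrix.trace_sub, Matrix.trace_smul, hρ, hω]
    simp
  have hσle : overlap (Φ (ρ - c • ω)) ψ ≤ 1 - c := by
    simpa only [htr, overlap_smul, overlap_one hψ, mul_one] using
      overlap_mono hσ.le_trace_smul_one ψ
  have hsplit : Φ ρ = c • Φ ω + Φ (ρ - c • ω) := by
    rw [map_sub, LinearMap.map_smul_of_tower]; abel
  rw [hsplit, overlap_add, overlap_smul]
  linarith

end

theorem no_go_purification_deterministic_general {d d' : ℕ}
    (F : Set (Matrix (Fin d) (Fin d) ℂ)) (hFne : F.Nonempty)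
    (hFden : ∀ ω ∈ F, IsDensity ω)
    (F' : Set (Matrix (Fin d') (Fin d') ℂ)) (hF'den : ∀ ω ∈ F', IsDensity ω)
    (E : Matrix (Fin d) (Fin d) ℂ →ₗ[ℂ] Matrix (Fin d') (Fin d') ℂ)
    (hEpos : PosMap E) (hEtp : TracePreserving E)
    (hEfree : ∀ ω ∈ F, E ω ∈ F')
    (ρ : Matrix (Fin d) (Fin d) ℂ) (hρ : IsDensity ρ)
    (ψ : Fin d' → ℂ) (hψ : dotProduct (star ψ) ψ = 1)
    (ε : ℝ)
    (hfid : 1 - ε ≤ overlap (E ρ) ψ) :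
    minEig ρ * (1 - maxOverlap F' ψ) ≤ ε := by
  obtain ⟨ω, hω⟩ := hFne
  have hfid_le : overlap (E ρ) ψ ≤ minEig ρ * overlap (E ω) ψ + (1 - minEig ρ) :=
    overlap_map_le_of_smul_le hEpos hEtp hρ.2 (hFden ω hω).2
      (minEig_smul_le hρ.1 (hFden ω hω)) hψ
  have hfree : overlap (E ω) ψ ≤ maxOverlap F' ψ :=
    overlap_le_maxOverlap hF'den hψ (hEfree ω hω)
  calc minEig ρ * (1 - maxOverlap F' ψ) ≤ minEig ρ * (1 - overlap (E ω) ψ) :=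
        mul_le_mul_of_nonneg_left (by linarith) (minEig_nonneg hρ.1)
    _ ≤ ε := by linarith

/-- **Theorem 1, deterministic case.**  No free deterministic protocol can purify a full-rank
state to a pure target with error below `λ_min(ρ)(1 - f_ψ)`. -/
theorem no_go_purification_deterministic {d d' : ℕ}
    (F : Set (Matrix (Fin d) (Fin d) ℂ)) (hFne : F.Nonempty)
    (hFden : ∀ ω ∈ F, IsDensity ω)
    (F' : Set (Matrix (Fin d') (Fin d') ℂ)) (hF'den : ∀ ω ∈ F', IsDensity ω)
    (E : Matrix (Fin d) (Fin d) ℂ →ₗ[ℂ] Matrix (Fin d') (Fin d') ℂ)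
    (hEpos : PosMap E) (hEtp : TracePreserving E)
    (hEfree : ∀ ω ∈ F, E ω ∈ F')
    (ρ : Matrix (Fin d) (Fin d) ℂ) (hρ : IsDensity ρ) (hρfull : 0 < minEig ρ)
    (ψ : Fin d' → ℂ) (hψ : dotProduct (star ψ) ψ = 1)
    (ε : ℝ) (hε : 0 ≤ ε)
    (hfid : 1 - ε ≤ overlap (E ρ) ψ) :
    minEig ρ * (1 - maxOverlap F' ψ) ≤ ε :=
  no_go_purification_deterministic_general F hFne hFden F' hF'den E hEpos hEtp hEfree ρ hρ ψ hψ ε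
    hfid
end
end

section
/- Let ρ be a full-rank density matrix on ℂ^d, let σ be a density matrix on ℂ^d, and let 0 ≤ ε < λ_min(ρ). Then β_ε(ρ‖σ) ≥ (λ_min(ρ) − ε)/λ_min(ρ); equivalently, 0 ≤ D_H^ε(ρ‖σ) ≤ log(λ_min(ρ)/(λ_min(ρ) − ε)). In particular, the hypothesis testing relative entropy of a full-rank state is continuous at ε = 0, where it vanishes. (Lemma S1.) -/
open scoped Matrix ComplexOrder

noncomputable section

/-- The optimal hypothesis-testing error
`β_ε(ρ‖σ) = inf { Tr(M σ) : 0 ≤ M ≤ I, Tr(ρ M) ≥ 1 - ε }`. -/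
noncomputable def betaErr {n : Type*} [Fintype n] [DecidableEq n] (ε : ℝ)
    (ρ σ : Matrix n n ℂ) : ℝ :=
  sInf {x : ℝ | ∃ M : Matrix n n ℂ, M.PosSemidef ∧ (1 - M).PosSemidef ∧
    1 - ε ≤ ((ρ * M).trace).re ∧ x = ((σ * M).trace).re}

/-- The hypothesis testing relative entropy `D_H^ε(ρ‖σ) = -log β_ε(ρ‖σ)`. -/
noncomputable def DH {n : Type*} [Fintype n] [DecidableEq n] (ε : ℝ)
    (ρ σ : Matrix n n ℂ) : ℝ :=
  - Real.log (betaErr ε ρ σ)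


/-! If `0 ≤ M ≤ 1` is a test with `Tr(ρM) ≥ 1 - ε`, its complement `N = 1 - M` is positive,
so `λ_min(ρ) Tr N ≤ Tr(ρN) ≤ ε`; and `σ ≤ 1` gives `Tr(σN) ≤ Tr N`. Hence
`Tr(σM) = 1 - Tr(σN) ≥ 1 - ε / λ_min(ρ)`. The trivial test `M = 1` gives `β_ε(ρ‖σ) ≤ 1`. -/

namespace Matrix

open scoped MatrixOrder

section RCLike

variable {n 𝕜 : Type*} [Fintype n] [DecidableEq n] [RCLike 𝕜]

theorem trace_mul_nonneg {A B : Matrix n n 𝕜} (hA : 0 ≤ A) (hB : 0 ≤ B) :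
    0 ≤ (A * B).trace := by
  rw [← CFC.sqrt_mul_sqrt_self A hA, Matrix.mul_assoc, trace_mul_comm, Matrix.mul_assoc,
    ← Matrix.mul_assoc]
  exact (nonneg_iff_posSemidef.mp
    (conjugate_nonneg_of_nonneg hB (CFC.sqrt_nonneg A))).trace_nonneg

theorem trace_mul_le_trace_mul_of_le {A A' B : Matrix n n 𝕜} (hA : A ≤ A') (hB : 0 ≤ B) :
    (A * B).trace ≤ (A' * B).trace := by
  simpa [sub_mul, trace_sub] using trace_mul_nonneg (sub_nonneg.mpr hA) hB

end RCLike

variable {n : Type*} [Fintype n] [DecidableEq n]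

theorem IsHermitian.algebraMap_minEig_le {A : Matrix n n ℂ} (hA : A.IsHermitian) :
    algebraMap ℝ _ (minEig A) ≤ A := by
  refine algebraMap_le_of_le_spectrum (fun x hx => ?_) hA
  obtain ⟨i, rfl⟩ := hA.spectrum_real_eq_range_eigenvalues ▸ hx
  rw [minEig, dif_pos hA]
  exact ciInf_le (Set.finite_range _).bddBelow i

theorem PosSemidef.le_one_of_trace_eq_one {A : Matrix n n ℂ} (hA : A.PosSemidef)
    (htr : A.trace = 1) : A ≤ 1 := by
  refine CFC.le_one (R := ℝ) (fun x hx => ?_) hA.isHermitian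
  obtain ⟨i, rfl⟩ := hA.isHermitian.spectrum_real_eq_range_eigenvalues ▸ hx
  have hsum : ∑ j, hA.isHermitian.eigenvalues j = 1 := Complex.ofReal_injective <| by
    push_cast
    exact hA.isHermitian.trace_eq_sum_eigenvalues.symm.trans htr
  exact hsum ▸ Finset.single_le_sum (fun j _ => hA.eigenvalues_nonneg j) (Finset.mem_univ i)

end Matrix

section HypothesisTesting

open scoped MatrixOrder

variable {n : Type*} [Fintype n] [DecidableEq n]

theorem one_sub_div_le_re_trace_mul {ρ σ M : Matrix n n ℂ} {l ε : ℝ} (hl : 0 < l)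
    (hρl : algebraMap ℝ _ l ≤ ρ) (hρ : ρ.trace = 1) (hσ : σ ≤ 1) (hσtr : σ.trace = 1)
    (hM : M ≤ 1) (hρM : 1 - ε ≤ (ρ * M).trace.re) :
    1 - ε / l ≤ (σ * M).trace.re := by
  have hN : 0 ≤ 1 - M := sub_nonneg.mpr hM
  have hρN : l * (1 - M).trace.re ≤ (ρ * (1 - M)).trace.re := by
    simpa [Algebra.algebraMap_eq_smul_one] using
      (Complex.le_def.mp (Matrix.trace_mul_le_trace_mul_of_le hρl hN)).1
  have hσN : (σ * (1 - M)).trace.re ≤ (1 - M).trace.re := by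
    simpa using (Complex.le_def.mp (Matrix.trace_mul_le_trace_mul_of_le hσ hN)).1
  simp only [Matrix.mul_sub, Matrix.mul_one, Matrix.trace_sub, Complex.sub_re, hρ, hσtr,
    Complex.one_re] at hρN hσN
  rw [sub_le_comm, le_div_iff₀ hl]
  linarith [mul_le_mul_of_nonneg_left hσN hl.le]

theorem le_betaErr {ρ σ : Matrix n n ℂ} {ε c : ℝ} (hε : 0 ≤ ε) (hρ : ρ.trace = 1)
    (hσ : σ.trace = 1)
    (h : ∀ M : Matrix n n ℂ, M ≤ 1 → 1 - ε ≤ (ρ * M).trace.re → c ≤ (σ * M).trace.re) :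
    c ≤ betaErr ε ρ σ :=
  le_csInf ⟨1, 1, .one, by simpa using .zero, by simp [hρ, hε], by simp [hσ]⟩
    fun _ ⟨M, _, hM, hρM, hx⟩ => hx ▸ h M (sub_nonneg.mp hM.nonneg) hρM

theorem betaErr_le_one {ρ σ : Matrix n n ℂ} {ε : ℝ} (hε : 0 ≤ ε) (hρ : ρ.trace = 1)
    (hσ : σ.PosSemidef) (hσtr : σ.trace = 1) : betaErr ε ρ σ ≤ 1 := by
  refine csInf_le ⟨0, ?_⟩ ⟨1, .one, by simpa using .zero, by simp [hρ, hε], by simp [hσtr]⟩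
  rintro _ ⟨M, hM, -, -, rfl⟩
  exact (Complex.le_def.mp (Matrix.trace_mul_nonneg hσ.nonneg hM.nonneg)).1

end HypothesisTesting

theorem hypothesis_testing_continuity_general {d : ℕ}
    (ρ σ : Matrix (Fin d) (Fin d) ℂ) (hρ : IsDensity ρ) (hσ : IsDensity σ)
    (ε : ℝ) (hε : 0 ≤ ε) (hεlt : ε < minEig ρ) :
    (minEig ρ - ε) / minEig ρ ≤ betaErr ε ρ σ ∧
    0 ≤ DH ε ρ σ ∧ DH ε ρ σ ≤ Real.log (minEig ρ / (minEig ρ - ε)) := by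
  obtain ⟨hρpsd, hρtr⟩ := hρ
  obtain ⟨hσpsd, hσtr⟩ := hσ
  have hmin : 0 < minEig ρ := hε.trans_lt hεlt
  have hlow : (minEig ρ - ε) / minEig ρ ≤ betaErr ε ρ σ := by
    rw [← one_sub_div hmin.ne']
    exact le_betaErr hε hρtr hσtr fun M hM hρM =>
      one_sub_div_le_re_trace_mul hmin hρpsd.isHermitian.algebraMap_minEig_le hρtr
        (hσpsd.le_one_of_trace_eq_one hσtr) hσtr hM hρM
  have hpos : 0 < (minEig ρ - ε) / minEig ρ := div_pos (sub_pos.mpr hεlt) hmin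
  refine ⟨hlow, neg_nonneg.mpr (Real.log_nonpos (hpos.trans_le hlow).le
    (betaErr_le_one hε hρtr hσpsd hσtr)), ?_⟩
  rw [DH, ← inv_div, Real.log_inv, neg_le_neg_iff]
  exact Real.log_le_log hpos hlow

/-- **Lemma S1.**  For a full-rank state `ρ` and `0 ≤ ε < λ_min(ρ)`,
`β_ε(ρ‖σ) ≥ (λ_min(ρ) - ε)/λ_min(ρ)`; equivalently
`0 ≤ D_H^ε(ρ‖σ) ≤ log(λ_min(ρ)/(λ_min(ρ) - ε))`.  In particular the hypothesis testing
relative entropy of a full-rank state is continuous at `ε = 0`, where it vanishes. -/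
theorem hypothesis_testing_continuity {d : ℕ}
    (ρ σ : Matrix (Fin d) (Fin d) ℂ) (hρ : IsDensity ρ) (hσ : IsDensity σ)
    (hρfull : 0 < minEig ρ)
    (ε : ℝ) (hε : 0 ≤ ε) (hεlt : ε < minEig ρ) :
    (minEig ρ - ε) / minEig ρ ≤ betaErr ε ρ σ ∧
    0 ≤ DH ε ρ σ ∧ DH ε ρ σ ≤ Real.log (minEig ρ / (minEig ρ - ε)) :=
  hypothesis_testing_continuity_general ρ σ hρ hσ ε hε hεlt
end
end

section
/- Let F be a nonempty closed set of density matrices on ℂ^d, let ρ be a density matrix on ℂ^d with R_F(ρ) < ∞, and let L : M_d(ℂ) → M_{d'}(ℂ) be a linear map such that Tr(L(τ)) is a nonnegative real number for every density matrix τ on ℂ^d. Then there exists ω ∈ F such that Tr(L(ω)) ≥ Tr(L(ρ))/(1 + R_F(ρ)). (Lemma S3.) -/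
/-!
A closed set of density matrices is compact, so the real functional `f = Re ∘ Tr ∘ L` attains its
maximum `M` on `F` at some `ω`. For a feasible `s`, with `(ρ + sσ)/(1+s) ∈ F`, positivity of `f σ`
gives `f ρ ≤ (1+s) M`; this inequality is closed in `s`, so it survives passing to the infimum
`R_F(ρ)` of the feasible set.
-/

open scoped Matrix ComplexOrder

noncomputable section

/-- The feasible set for the generalized robustness:
`{ s ≥ 0 : ∃ density σ, (ρ + sσ)/(1+s) ∈ F }`.  Its nonemptiness encodes `R_F(ρ) < ∞`. -/
def RobustSet {n : Type*} [Fintype n] (F : Set (Matrix n n ℂ)) (ρ : Matrix n n ℂ) : Set ℝ :=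
  {s : ℝ | 0 ≤ s ∧ ∃ σ : Matrix n n ℂ, IsDensity σ ∧ (1 + s)⁻¹ • (ρ + s • σ) ∈ F}

/-- The generalized robustness `R_F(ρ)`. -/
noncomputable def Robustness {n : Type*} [Fintype n] (F : Set (Matrix n n ℂ))
    (ρ : Matrix n n ℂ) : ℝ :=
  sInf (RobustSet F ρ)

attribute [local instance] Matrix.normedAddCommGroup Matrix.normedSpace

namespace IsDensity

variable {n : Type*} [Fintype n] {A : Matrix n n ℂ}

lemma diag_le_one (hA : IsDensity A) (i : n) : A i i ≤ 1 :=
  hA.2 ▸ Finset.single_le_sum (f := A.diag) (fun _ _ => hA.1.diag_nonneg) (Finset.mem_univ i)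

/-- The `2 × 2` principal minor on rows `i, j` is nonnegative, so `|Aᵢⱼ|² ≤ Aᵢᵢ Aⱼⱼ ≤ 1`. -/
lemma norm_apply_le_one (hA : IsDensity A) (i j : n) : ‖A i j‖ ≤ 1 := by
  have hminor := (hA.1.submatrix ![i, j]).det_nonneg
  have hji : A j i = star (A i j) := by
    simpa using congrFun (congrFun hA.1.isHermitian.eq.symm j) i
  rw [Matrix.det_fin_two] at hminor
  simp only [Matrix.submatrix_apply, Matrix.cons_val_zero, Matrix.cons_val_one, hji] at hminor
  have hsq : ((‖A i j‖ ^ 2 : ℝ) : ℂ) ≤ 1 := by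
    rw [Complex.ofReal_pow, ← Complex.mul_conj']
    calc A i j * star (A i j) ≤ A i i * A j j := sub_nonneg.mp hminor
      _ ≤ 1 := mul_le_one₀ (hA.diag_le_one i) hA.1.diag_nonneg (hA.diag_le_one j)
  exact (sq_le_one_iff₀ (norm_nonneg _)).mp (by exact_mod_cast hsq)

end IsDensity

lemma isBounded_setOf_isDensity {n : Type*} [Fintype n] :
    Bornology.IsBounded {A : Matrix n n ℂ | IsDensity A} :=
  (Metric.isBounded_closedBall (x := 0) (r := 1)).subset fun A hA => by
    rw [Metric.mem_closedBall, dist_zero_right, Matrix.norm_le_iff zero_le_one]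
    exact hA.norm_apply_le_one

section Robustness

variable {n : Type*} [Fintype n] {F : Set (Matrix n n ℂ)} {ρ : Matrix n n ℂ}

lemma robustness_nonneg : 0 ≤ Robustness F ρ :=
  Real.sInf_nonneg fun _ hs => hs.1

variable {f : Matrix n n ℂ →ₗ[ℝ] ℝ} {M : ℝ}

lemma le_one_add_mul_of_mem_robustSet (hf : ∀ σ, IsDensity σ → 0 ≤ f σ)
    (hM : ∀ ω ∈ F, f ω ≤ M) {s : ℝ} (hs : s ∈ RobustSet F ρ) : f ρ ≤ (1 + s) * M := by
  obtain ⟨hs0, σ, hσ, hmix⟩ := hs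
  have hpos : 0 < 1 + s := by linarith
  have hmix_le : (1 + s)⁻¹ * (f ρ + s * f σ) ≤ M := by
    simpa only [map_smul, map_add, smul_eq_mul] using hM _ hmix
  rw [inv_mul_le_iff₀ hpos] at hmix_le
  nlinarith [hf σ hσ]

lemma le_one_add_robustness_mul (hf : ∀ σ, IsDensity σ → 0 ≤ f σ) (hM : ∀ ω ∈ F, f ω ≤ M)
    (hR : (RobustSet F ρ).Nonempty) : f ρ ≤ (1 + Robustness F ρ) * M :=
  closure_minimal (t := {s : ℝ | f ρ ≤ (1 + s) * M})
    (fun _ hs => le_one_add_mul_of_mem_robustSet hf hM hs)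
    (isClosed_le continuous_const (by fun_prop))
    (csInf_mem_closure hR ⟨0, fun _ hs => hs.1⟩)

end Robustness

theorem robustness_free_state_trace_general {d d' : ℕ}
    (F : Set (Matrix (Fin d) (Fin d) ℂ)) (hFne : F.Nonempty) (hFcl : IsClosed F)
    (hFden : ∀ ω ∈ F, IsDensity ω)
    (ρ : Matrix (Fin d) (Fin d) ℂ)
    (hRfin : (RobustSet F ρ).Nonempty)
    (L : Matrix (Fin d) (Fin d) ℂ →ₗ[ℂ] Matrix (Fin d') (Fin d') ℂ)
    (hL : ∀ τ : Matrix (Fin d) (Fin d) ℂ, IsDensity τ →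
      0 ≤ ((L τ).trace).re ∧ ((L τ).trace).im = 0) :
    ∃ ω ∈ F, ((L ρ).trace).re / (1 + Robustness F ρ) ≤ ((L ω).trace).re := by
  let f : Matrix (Fin d) (Fin d) ℂ →ₗ[ℝ] ℝ :=
    Complex.reLm ∘ₗ ((Matrix.traceLinearMap (Fin d') ℂ ℂ) ∘ₗ L).restrictScalars ℝ
  have hFcompact : IsCompact F :=
    Metric.isCompact_of_isClosed_isBounded hFcl (isBounded_setOf_isDensity.subset hFden)
  obtain ⟨ω, hωF, hωmax⟩ :=
    hFcompact.exists_isMaxOn hFne f.continuous_of_finiteDimensional.continuousOn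
  refine ⟨ω, hωF, ?_⟩
  rw [div_le_iff₀ (by linarith [robustness_nonneg (F := F) (ρ := ρ)]), mul_comm]
  exact le_one_add_robustness_mul (fun σ hσ => (hL σ hσ).1) (fun _ h => hωmax h) hRfin

/-- **Lemma S3.**  For any linear map `L` whose trace functional is nonnegative (and real)
on density matrices, some free state `ω ∈ F` satisfies
`Tr(L(ω)) ≥ Tr(L(ρ))/(1 + R_F(ρ))`. -/
theorem robustness_free_state_trace {d d' : ℕ}
    (F : Set (Matrix (Fin d) (Fin d) ℂ)) (hFne : F.Nonempty) (hFcl : IsClosed F)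
    (hFden : ∀ ω ∈ F, IsDensity ω)
    (ρ : Matrix (Fin d) (Fin d) ℂ) (hρ : IsDensity ρ)
    (hRfin : (RobustSet F ρ).Nonempty)
    (L : Matrix (Fin d) (Fin d) ℂ →ₗ[ℂ] Matrix (Fin d') (Fin d') ℂ)
    (hL : ∀ τ : Matrix (Fin d) (Fin d) ℂ, IsDensity τ →
      0 ≤ ((L τ).trace).re ∧ ((L τ).trace).im = 0) :
    ∃ ω ∈ F, ((L ρ).trace).re / (1 + Robustness F ρ) ≤ ((L ω).trace).re :=
  robustness_free_state_trace_general F hFne hFcl hFden ρ hRfin L hL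
end
end

section
/- Let N, M : M_a(ℂ) → M_b(ℂ) be quantum channels, let s ≥ 1, and let E : M_c(ℂ) → M_{a·s}(ℂ) and D : M_{b·s}(ℂ) → M_e(ℂ) be quantum channels. Define the superchannel Π by Π(X) := D ∘ (X ⊠ id_s) ∘ E for channels X : M_a(ℂ) → M_b(ℂ). Then D_min(Π(N)‖Π(M)) ≤ D_min(N‖M), where D_min(·‖·) on channels is the channel min-relative entropy. (Lemma S4: monotonicity of the channel min-relative entropy under superchannels.) -/
open scoped Matrix ComplexOrder

noncomputable section

/-- `id_r ⊞ Φ`: the unique linear extension of `Y ⊗ X ↦ Y ⊗ Φ(X)`, realized blockwise on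
the product index type. -/
noncomputable def idTensor {ι κ : Type*} [Fintype ι] [Fintype κ] (r : ℕ)
    (Φ : Matrix ι ι ℂ →ₗ[ℂ] Matrix κ κ ℂ) :
    Matrix (Fin r × ι) (Fin r × ι) ℂ →ₗ[ℂ] Matrix (Fin r × κ) (Fin r × κ) ℂ where
  toFun Z := Matrix.of fun x y => Φ (Matrix.of fun k l => Z (x.1, k) (y.1, l)) x.2 y.2
  map_add' Z W := by
    ext x y
    have h : (Matrix.of fun k l => Z (x.1, k) (y.1, l) + W (x.1, k) (y.1, l)) =
        (Matrix.of fun k l => Z (x.1, k) (y.1, l)) +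
          (Matrix.of fun k l => W (x.1, k) (y.1, l)) := by
      ext k l; rfl
    simp only [Matrix.of_apply, Matrix.add_apply]
    rw [h, map_add]
    rfl
  map_smul' c Z := by
    ext x y
    have h : (Matrix.of fun k l => c • Z (x.1, k) (y.1, l)) =
        c • (Matrix.of fun k l => Z (x.1, k) (y.1, l)) := by
      ext k l; rfl
    simp only [Matrix.of_apply, Matrix.smul_apply, RingHom.id_apply]
    rw [h, map_smul]
    rfl

/-- `Φ ⊞ id_s`: the unique linear extension of `X ⊗ Y ↦ Φ(X) ⊗ Y`, realized blockwise on
the product index type. -/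
noncomputable def tensorId {ι κ : Type*} [Fintype ι] [Fintype κ]
    (Φ : Matrix ι ι ℂ →ₗ[ℂ] Matrix κ κ ℂ) (s : ℕ) :
    Matrix (ι × Fin s) (ι × Fin s) ℂ →ₗ[ℂ] Matrix (κ × Fin s) (κ × Fin s) ℂ where
  toFun Z := Matrix.of fun x y => Φ (Matrix.of fun k l => Z (k, x.2) (l, y.2)) x.1 y.1
  map_add' Z W := by
    ext x y
    have h : (Matrix.of fun k l => Z (k, x.2) (l, y.2) + W (k, x.2) (l, y.2)) =
        (Matrix.of fun k l => Z (k, x.2) (l, y.2)) +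
          (Matrix.of fun k l => W (k, x.2) (l, y.2)) := by
      ext k l; rfl
    simp only [Matrix.of_apply, Matrix.add_apply]
    rw [h, map_add]
    rfl
  map_smul' c Z := by
    ext x y
    have h : (Matrix.of fun k l => c • Z (k, x.2) (l, y.2)) =
        c • (Matrix.of fun k l => Z (k, x.2) (l, y.2)) := by
      ext k l; rfl
    simp only [Matrix.of_apply, Matrix.smul_apply, RingHom.id_apply]
    rw [h, map_smul]
    rfl

/-- Complete positivity: `id_r ⊞ Φ` is positive for every `r`. -/
def CompletelyPos {ι κ : Type*} [Fintype ι] [Fintype κ]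
    (Φ : Matrix ι ι ℂ →ₗ[ℂ] Matrix κ κ ℂ) : Prop :=
  ∀ (r : ℕ) (Z : Matrix (Fin r × ι) (Fin r × ι) ℂ), Z.PosSemidef →
    (idTensor r Φ Z).PosSemidef

/-- A quantum channel: a completely positive trace-preserving linear map. -/
def IsChannel {ι κ : Type*} [Fintype ι] [Fintype κ]
    (Φ : Matrix ι ι ℂ →ₗ[ℂ] Matrix κ κ ℂ) : Prop :=
  CompletelyPos Φ ∧ TracePreserving Φ

open scoped ENNReal

/-- `D_min(ρ‖σ) = -log β_0(ρ‖σ) ∈ [0,∞]` (with value `∞` when `β_0 = 0`). -/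
noncomputable def eDmin {n : Type*} [Fintype n] [DecidableEq n]
    (ρ σ : Matrix n n ℂ) : ℝ≥0∞ :=
  letI := Classical.propDecidable (betaErr 0 ρ σ = 0)
  if betaErr 0 ρ σ = 0 then ⊤ else ENNReal.ofReal (- Real.log (betaErr 0 ρ σ))

/-- The channel min-relative entropy
`D_min(N‖M) = sup_{r ≥ 1, ρ} D_min((id_r ⊞ N)(ρ) ‖ (id_r ⊞ M)(ρ))`. -/
noncomputable def DminCh {ι κ : Type*} [Fintype ι] [Fintype κ] [DecidableEq κ]
    (N M : Matrix ι ι ℂ →ₗ[ℂ] Matrix κ κ ℂ) : ℝ≥0∞ :=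
  ⨆ (r : ℕ) (_ : 1 ≤ r) (ρ : Matrix (Fin r × ι) (Fin r × ι) ℂ) (_ : IsDensity ρ),
    eDmin (idTensor r N ρ) (idTensor r M ρ)

/-! The pre-processing `id_r ⊠ E` maps states to states, and regrouping the reference system
`Fin r × Fin s` as `Fin (r * s)` identifies `id_r ⊠ (X ⊠ id_s)` with `id_{rs} ⊠ X` up to
relabelling; so both only restrict the states over which `D_min(N‖M)` is a supremum. The
post-processing by `id_r ⊠ D` can only increase `β₀`: a test `T` for the processed pair pulls back
along the trace-pairing adjoint of `id_r ⊠ D` to a test for the unprocessed pair with the same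
success probabilities. -/

open Matrix

section PosSemidef

variable {n : Type*} [Fintype n]

theorem Matrix.posSemidef_iff_forall_star_dotProduct_mulVec_nonneg {A : Matrix n n ℂ} :
    A.PosSemidef ↔ ∀ x, 0 ≤ star x ⬝ᵥ (A *ᵥ x) := by
  classical
  rw [← isPositive_toEuclideanLin_iff, LinearMap.isPositive_iff_complex]
  refine (EuclideanSpace.equiv n ℂ).forall_congr fun x => ?_
  change _ ↔ 0 ≤ star x.ofLp ⬝ᵥ (A *ᵥ x.ofLp)
  rw [EuclideanSpace.inner_eq_star_dotProduct, ofLp_toLpLin, toLin'_apply, dotProduct_star,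
    dotProduct_comm (A *ᵥ _)]
  generalize star x.ofLp ⬝ᵥ (A *ᵥ x.ofLp) = z
  simp [Complex.nonneg_iff, Complex.ext_iff, eq_comm, and_comm]

theorem Matrix.trace_mul_vecMulVec_star (A : Matrix n n ℂ) (x : n → ℂ) :
    (A * vecMulVec x (star x)).trace = star x ⬝ᵥ (A *ᵥ x) := by
  rw [mul_vecMulVec, trace_vecMulVec, dotProduct_comm]

theorem Matrix.PosSemidef.trace_mul_nonneg {A B : Matrix n n ℂ} (hA : A.PosSemidef)
    (hB : B.PosSemidef) : 0 ≤ (A * B).trace := by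
  obtain ⟨k, v, rfl⟩ := posSemidef_iff_eq_sum_vecMulVec.mp hB
  rw [Finset.mul_sum, trace_sum]
  exact Finset.sum_nonneg fun i _ =>
    trace_mul_vecMulVec_star A (v i) ▸ hA.dotProduct_mulVec_nonneg _

theorem Matrix.PosSemidef.re_trace_mul_nonneg {A B : Matrix n n ℂ} (hA : A.PosSemidef)
    (hB : B.PosSemidef) : 0 ≤ (A * B).trace.re :=
  (Complex.nonneg_iff.mp (hA.trace_mul_nonneg hB)).1

end PosSemidef

section TraceAdjoint

variable {m n : Type*} [Fintype m] [DecidableEq n]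

def traceAdjoint (Φ : Matrix n n ℂ →ₗ[ℂ] Matrix m m ℂ) (T : Matrix m m ℂ) : Matrix n n ℂ :=
  Matrix.of fun i j => (Φ (single j i 1) * T).trace

theorem trace_mul_traceAdjoint [Fintype n] (Φ : Matrix n n ℂ →ₗ[ℂ] Matrix m m ℂ)
    (A : Matrix n n ℂ) (T : Matrix m m ℂ) : (A * traceAdjoint Φ T).trace = (Φ A * T).trace := by
  induction A using Matrix.induction_on' with
  | h_zero => simp
  | h_add A B hA hB => simp [add_mul, hA, hB]
  | h_std_basis i j c =>
    have hc : single i j c = c • single i j 1 := by rw [smul_single, smul_eq_mul, mul_one]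
    rw [trace_single_mul, hc, map_smul, smul_mul, trace_smul]
    rfl

theorem traceAdjoint_sub (Φ : Matrix n n ℂ →ₗ[ℂ] Matrix m m ℂ) (T T' : Matrix m m ℂ) :
    traceAdjoint Φ (T - T') = traceAdjoint Φ T - traceAdjoint Φ T' := by
  ext i j
  simp [traceAdjoint, mul_sub]

theorem TracePreserving.traceAdjoint_one [Fintype n] [DecidableEq m]
    {Φ : Matrix n n ℂ →ₗ[ℂ] Matrix m m ℂ} (hΦ : TracePreserving Φ) : traceAdjoint Φ 1 = 1 := by
  ext i j
  rw [traceAdjoint, of_apply, mul_one, hΦ]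
  obtain rfl | h := eq_or_ne i j
  · simp
  · simp [h, Ne.symm h, trace_single_eq_of_ne]

theorem PosMap.traceAdjoint_posSemidef [Fintype n] {Φ : Matrix n n ℂ →ₗ[ℂ] Matrix m m ℂ}
    (hΦ : PosMap Φ) {T : Matrix m m ℂ} (hT : T.PosSemidef) : (traceAdjoint Φ T).PosSemidef := by
  refine posSemidef_iff_forall_star_dotProduct_mulVec_nonneg.mpr fun x => ?_
  rw [← trace_mul_vecMulVec_star, trace_mul_comm, trace_mul_traceAdjoint]
  exact (hΦ _ (posSemidef_vecMulVec_self_star x)).trace_mul_nonneg hT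

end TraceAdjoint

section HypothesisTesting

variable {m n : Type*} [Fintype m] [Fintype n] [DecidableEq m] [DecidableEq n]

theorem betaErr_nonneg (ε : ℝ) (ρ : Matrix n n ℂ) {σ : Matrix n n ℂ} (hσ : σ.PosSemidef) :
    0 ≤ betaErr ε ρ σ :=
  Real.sInf_nonneg fun _ ⟨_, hT, _, _, hx⟩ => hx ▸ hσ.re_trace_mul_nonneg hT

theorem betaErr_le_betaErr_map {ε : ℝ} (hε : 0 ≤ ε) {Φ : Matrix n n ℂ →ₗ[ℂ] Matrix m m ℂ}
    (hpos : PosMap Φ) (htp : TracePreserving Φ) {ρ σ : Matrix n n ℂ} (hρ : ρ.trace = 1)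
    (hσ : σ.PosSemidef) : betaErr ε ρ σ ≤ betaErr ε (Φ ρ) (Φ σ) := by
  refine csInf_le_csInf ⟨0, fun _ ⟨_, hT, _, _, hx⟩ => hx ▸ hσ.re_trace_mul_nonneg hT⟩
    ⟨_, 1, PosSemidef.one, by simp [PosSemidef.zero], by simp [htp ρ, hρ, hε], rfl⟩ ?_
  rintro _ ⟨T, hT, hT_le_one, hρT, rfl⟩
  refine ⟨traceAdjoint Φ T, hpos.traceAdjoint_posSemidef hT, ?_, ?_, ?_⟩
  · rw [← htp.traceAdjoint_one, ← traceAdjoint_sub]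
    exact hpos.traceAdjoint_posSemidef hT_le_one
  · rwa [trace_mul_traceAdjoint]
  · rw [trace_mul_traceAdjoint]

theorem betaErr_reindex (e : n ≃ m) (ε : ℝ) (ρ σ : Matrix n n ℂ) :
    betaErr ε (reindex e e ρ) (reindex e e σ) = betaErr ε ρ σ := by
  have htrace (A B : Matrix n n ℂ) : (reindex e e A * reindex e e B).trace = (A * B).trace := by
    rw [reindex_apply, reindex_apply, submatrix_mul_equiv]
    exact e.symm.sum_comp fun i => (A * B) i i
  have hpsd (A : Matrix n n ℂ) : (reindex e e A).PosSemidef ↔ A.PosSemidef :=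
    posSemidef_submatrix_equiv e.symm
  have hone (A : Matrix n n ℂ) : 1 - reindex e e A = reindex e e (1 - A) := by
    simp [submatrix_sub, submatrix_one_equiv]
  unfold betaErr
  congr 1
  ext x
  simp only [Set.mem_ofPred_eq]
  rw [(reindex e e).symm.exists_congr_left]
  simp only [Equiv.symm_symm, htrace, hone, hpsd]

theorem eDmin_le_eDmin_of_betaErr_le {ρ σ : Matrix n n ℂ} {ρ' σ' : Matrix m m ℂ}
    (h₀ : 0 ≤ betaErr 0 ρ σ) (h : betaErr 0 ρ σ ≤ betaErr 0 ρ' σ') :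
    eDmin ρ' σ' ≤ eDmin ρ σ := by
  unfold eDmin
  obtain h₀ | h₀ := h₀.eq_or_lt
  · simp [← h₀]
  rw [if_neg h₀.ne', if_neg (h₀.trans_le h).ne']
  exact ENNReal.ofReal_le_ofReal (neg_le_neg (Real.log_le_log h₀ h))

theorem eDmin_map_le {Φ : Matrix n n ℂ →ₗ[ℂ] Matrix m m ℂ} (hpos : PosMap Φ)
    (htp : TracePreserving Φ) {ρ σ : Matrix n n ℂ} (hρ : ρ.trace = 1) (hσ : σ.PosSemidef) :
    eDmin (Φ ρ) (Φ σ) ≤ eDmin ρ σ :=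
  eDmin_le_eDmin_of_betaErr_le (betaErr_nonneg 0 ρ hσ)
    (betaErr_le_betaErr_map le_rfl hpos htp hρ hσ)

theorem eDmin_reindex (e : n ≃ m) (ρ σ : Matrix n n ℂ) :
    eDmin (reindex e e ρ) (reindex e e σ) = eDmin ρ σ := by
  simp only [eDmin, betaErr_reindex]

end HypothesisTesting

section Channels

variable {ι κ μ : Type*} [Fintype ι] [Fintype κ] [Fintype μ]

theorem TracePreserving.idTensor {Φ : Matrix ι ι ℂ →ₗ[ℂ] Matrix κ κ ℂ} (hΦ : TracePreserving Φ)
    (r : ℕ) : TracePreserving (idTensor r Φ) := by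
  intro Z
  simp only [trace, diag, _root_.idTensor, LinearMap.coe_mk, AddHom.coe_mk, of_apply,
    Fintype.sum_prod_type]
  exact Finset.sum_congr rfl fun i _ => hΦ (of fun k l => Z (i, k) (i, l))

theorem TracePreserving.tensorId {Φ : Matrix ι ι ℂ →ₗ[ℂ] Matrix κ κ ℂ} (hΦ : TracePreserving Φ)
    (s : ℕ) : TracePreserving (tensorId Φ s) := by
  intro Z
  simp only [trace, diag, _root_.tensorId, LinearMap.coe_mk, AddHom.coe_mk, of_apply,
    Fintype.sum_prod_type_right]
  exact Finset.sum_congr rfl fun t _ => hΦ (of fun k l => Z (k, t) (l, t))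

theorem IsChannel.isDensity_idTensor {Φ : Matrix ι ι ℂ →ₗ[ℂ] Matrix κ κ ℂ} (hΦ : IsChannel Φ)
    (r : ℕ) {ρ : Matrix (Fin r × ι) (Fin r × ι) ℂ} (hρ : IsDensity ρ) :
    IsDensity (idTensor r Φ ρ) :=
  ⟨hΦ.1 r ρ hρ.1, (hΦ.2.idTensor r ρ).trans hρ.2⟩

theorem IsDensity.reindex {m n : Type*} [Fintype m] [Fintype n] {ρ : Matrix m m ℂ}
    (hρ : IsDensity ρ) (e : m ≃ n) : IsDensity (reindex e e ρ) :=
  ⟨(posSemidef_submatrix_equiv e.symm).mpr hρ.1, (e.symm.sum_comp fun i => ρ i i).trans hρ.2⟩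

theorem idTensor_comp (r : ℕ) (F : Matrix κ κ ℂ →ₗ[ℂ] Matrix μ μ ℂ)
    (G : Matrix ι ι ℂ →ₗ[ℂ] Matrix κ κ ℂ) :
    idTensor r (F ∘ₗ G) = idTensor r F ∘ₗ idTensor r G :=
  rfl

def finMulProdEquiv (r s : ℕ) (ι : Type*) : Fin r × (ι × Fin s) ≃ Fin (r * s) × ι :=
  ((Equiv.refl (Fin r)).prodCongr (Equiv.prodComm ι (Fin s))).trans <|
    (Equiv.prodAssoc (Fin r) (Fin s) ι).symm.trans <|
      finProdFinEquiv.prodCongr (Equiv.refl ι)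

theorem idTensor_tensorId (r s : ℕ) (Φ : Matrix ι ι ℂ →ₗ[ℂ] Matrix κ κ ℂ)
    (Z : Matrix (Fin r × (ι × Fin s)) (Fin r × (ι × Fin s)) ℂ) :
    idTensor r (tensorId Φ s) Z =
      reindex (finMulProdEquiv r s κ).symm (finMulProdEquiv r s κ).symm
        (idTensor (r * s) Φ (reindex (finMulProdEquiv r s ι) (finMulProdEquiv r s ι) Z)) := by
  ext ⟨i, k, t⟩ ⟨j, l, u⟩
  simp [idTensor, tensorId, finMulProdEquiv, -finProdFinEquiv_symm_apply]

theorem CompletelyPos.tensorId {Φ : Matrix ι ι ℂ →ₗ[ℂ] Matrix κ κ ℂ} (hΦ : CompletelyPos Φ)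
    (s : ℕ) : CompletelyPos (tensorId Φ s) := by
  intro r Z hZ
  rw [idTensor_tensorId, reindex_apply, posSemidef_submatrix_equiv]
  exact hΦ _ _ ((posSemidef_submatrix_equiv _).mpr hZ)

end Channels

section ChannelDmin

variable {ι κ μ ν : Type*} [Fintype ι] [Fintype κ] [Fintype μ] [Fintype ν] [DecidableEq κ]
  [DecidableEq ν]

theorem eDmin_idTensor_le_DminCh (N M : Matrix ι ι ℂ →ₗ[ℂ] Matrix κ κ ℂ) {r : ℕ} (hr : 1 ≤ r)
    {ρ : Matrix (Fin r × ι) (Fin r × ι) ℂ} (hρ : IsDensity ρ) :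
    eDmin (idTensor r N ρ) (idTensor r M ρ) ≤ DminCh N M :=
  le_iSup₂_of_le r hr (le_iSup₂_of_le ρ hρ le_rfl)

theorem DminCh_comp_right_le (N M : Matrix ι ι ℂ →ₗ[ℂ] Matrix κ κ ℂ)
    {E : Matrix μ μ ℂ →ₗ[ℂ] Matrix ι ι ℂ} (hE : IsChannel E) :
    DminCh (N ∘ₗ E) (M ∘ₗ E) ≤ DminCh N M := by
  refine iSup₂_le fun r hr => iSup₂_le fun ρ hρ => ?_
  rw [idTensor_comp, idTensor_comp, LinearMap.comp_apply, LinearMap.comp_apply]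
  exact eDmin_idTensor_le_DminCh N M hr (hE.isDensity_idTensor r hρ)

theorem DminCh_comp_left_le {N M : Matrix ι ι ℂ →ₗ[ℂ] Matrix κ κ ℂ} (hN : TracePreserving N)
    (hM : CompletelyPos M) {D : Matrix κ κ ℂ →ₗ[ℂ] Matrix ν ν ℂ} (hD : IsChannel D) :
    DminCh (D ∘ₗ N) (D ∘ₗ M) ≤ DminCh N M := by
  refine iSup₂_le fun r hr => iSup₂_le fun ρ hρ => ?_
  rw [idTensor_comp, idTensor_comp, LinearMap.comp_apply, LinearMap.comp_apply]
  have hNρ : (idTensor r N ρ).trace = 1 := (hN.idTensor r ρ).trans hρ.2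
  exact (eDmin_map_le (hD.1 r) (hD.2.idTensor r) hNρ (hM r ρ hρ.1)).trans
    (eDmin_idTensor_le_DminCh N M hr hρ)

theorem DminCh_tensorId_le (N M : Matrix ι ι ℂ →ₗ[ℂ] Matrix κ κ ℂ) {s : ℕ} (hs : 1 ≤ s) :
    DminCh (tensorId N s) (tensorId M s) ≤ DminCh N M := by
  refine iSup₂_le fun r hr => iSup₂_le fun ρ hρ => ?_
  rw [idTensor_tensorId, idTensor_tensorId, eDmin_reindex]
  exact eDmin_idTensor_le_DminCh N M (Nat.mul_le_mul hr hs) (hρ.reindex _)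

end ChannelDmin

/-- **Lemma S4.**  Monotonicity of the channel min-relative entropy under superchannels
`Π(X) = D ∘ (X ⊞ id_s) ∘ E`. -/
theorem channel_Dmin_monotone {a b c e s : ℕ} (hs : 1 ≤ s)
    (N M : Matrix (Fin a) (Fin a) ℂ →ₗ[ℂ] Matrix (Fin b) (Fin b) ℂ)
    (hN : IsChannel N) (hM : IsChannel M)
    (E : Matrix (Fin c) (Fin c) ℂ →ₗ[ℂ] Matrix (Fin a × Fin s) (Fin a × Fin s) ℂ)
    (hE : IsChannel E)
    (D : Matrix (Fin b × Fin s) (Fin b × Fin s) ℂ →ₗ[ℂ] Matrix (Fin e) (Fin e) ℂ)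
    (hD : IsChannel D) :
    DminCh (D ∘ₗ tensorId N s ∘ₗ E) (D ∘ₗ tensorId M s ∘ₗ E) ≤ DminCh N M :=
  calc DminCh ((D ∘ₗ tensorId N s) ∘ₗ E) ((D ∘ₗ tensorId M s) ∘ₗ E)
      ≤ DminCh (D ∘ₗ tensorId N s) (D ∘ₗ tensorId M s) := DminCh_comp_right_le _ _ hE
    _ ≤ DminCh (tensorId N s) (tensorId M s) :=
      DminCh_comp_left_le (hN.2.tensorId s) (hM.1.tensorId s) hD
    _ ≤ DminCh N M := DminCh_tensorId_le N M hs
end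
end
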